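/- arXiv:1404.6112 — 8 statements merged into one kernel-verified Lean document; each statement's English description precedes it below -/
import Mathlib

section
/- (Lemma 2, increasing case) Fix channel success probabilities f_pd, f_ps, f_sd ∈ (0,1) and a queue-selection probability p_q ∈ (0,1) with p_q < 1 − f_pd/f_sd. Then the maximum achievable primary arrival rate p_a ↦ Λ_p(p_q,p_a) is strictly increasing on [0,1]: for all 0 ≤ p_a1 < p_a2 ≤ 1 one has Λ_p(p_q,p_a1) < Λ_p(p_q,p_a2). -/
/-!
Writing `A = f_sd (1 - p_q)` and `x = p_a f_ps (1 - f_pd)`, one has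
`Λ_p = A (f_pd + x) / (A + x) = A - A (A - f_pd) / (A + x)`.
The hypothesis on `p_q` says exactly `f_pd < A`, so the subtracted term has a positive
numerator and a denominator that grows with `p_a`.
-/

/-- Maximum achievable primary arrival rate Λ_p(p_q, p_a). -/
noncomputable def maxPrimaryRate (f_pd f_ps f_sd p_q p_a : ℝ) : ℝ :=
  f_sd * (1 - p_q) * (f_pd + p_a * f_ps * (1 - f_pd)) /
    (f_sd * (1 - p_q) + p_a * f_ps * (1 - f_pd))

lemma mul_add_div_add_eq_sub_div {A f x : ℝ} (hx : A + x ≠ 0) :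
    A * (f + x) / (A + x) = A - A * (A - f) / (A + x) := by
  field_simp
  ring

lemma strictMonoOn_mul_add_div_add {A f : ℝ} (hA : 0 < A) (hfA : f < A) :
    StrictMonoOn (fun x => A * (f + x) / (A + x)) (Set.Ioi (-A)) := by
  intro x hx y hy hxy
  have hx' : 0 < A + x := by linarith [Set.mem_Ioi.mp hx]
  have hy' : 0 < A + y := by linarith [Set.mem_Ioi.mp hy]
  simp only [mul_add_div_add_eq_sub_div hx'.ne', mul_add_div_add_eq_sub_div hy'.ne']
  have hnum : 0 < A * (A - f) := mul_pos hA (sub_pos.mpr hfA)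
  linarith [div_lt_div_of_pos_left hnum hx' (by linarith : A + x < A + y)]

lemma maxPrimaryRate_strictMonoOn {f_pd f_ps f_sd p_q : ℝ} (hpd : f_pd < 1) (hps : 0 < f_ps)
    (hA : 0 < f_sd * (1 - p_q)) (hcoop : f_pd < f_sd * (1 - p_q)) :
    StrictMonoOn (maxPrimaryRate f_pd f_ps f_sd p_q) (Set.Ici 0) := by
  have hc : 0 < f_ps * (1 - f_pd) := mul_pos hps (sub_pos.mpr hpd)
  have hscale : StrictMono fun p_a : ℝ => p_a * f_ps * (1 - f_pd) := by
    simpa only [mul_assoc] using strictMono_mul_right_of_pos hc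
  have hmaps : Set.MapsTo (fun p_a : ℝ => p_a * f_ps * (1 - f_pd)) (Set.Ici 0)
      (Set.Ioi (-(f_sd * (1 - p_q)))) := fun p_a hp_a => by
    have : 0 ≤ p_a * f_ps * (1 - f_pd) := by
      rw [mul_assoc]; exact mul_nonneg hp_a hc.le
    exact Set.mem_Ioi.mpr (by linarith)
  exact (strictMonoOn_mul_add_div_add hA hcoop).comp (hscale.strictMonoOn _) hmaps

theorem maxPrimaryRate_strictMono_in_pa_general (f_pd f_ps f_sd p_q : ℝ)
    (hpd : f_pd ∈ Set.Ioo (0 : ℝ) 1) (hps : f_ps ∈ Set.Ioo (0 : ℝ) 1)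
    (hsd : f_sd ∈ Set.Ioo (0 : ℝ) 1)
    (hcoop : p_q < 1 - f_pd / f_sd) :
    ∀ p_a1 p_a2 : ℝ, 0 ≤ p_a1 → p_a1 < p_a2 → p_a2 ≤ 1 →
      maxPrimaryRate f_pd f_ps f_sd p_q p_a1 < maxPrimaryRate f_pd f_ps f_sd p_q p_a2 := by
  intro p_a1 p_a2 h1 h12 _
  have hcoop' : f_pd < f_sd * (1 - p_q) :=
    (div_lt_iff₀' hsd.1).mp (by linarith)
  have hA : 0 < f_sd * (1 - p_q) := hpd.1.trans hcoop'
  exact maxPrimaryRate_strictMonoOn hpd.2 hps.1 hA hcoop' h1 (h1.trans h12.le) h12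

/-- Lemma 2, increasing case: if p_q < 1 - f_pd/f_sd then Λ_p(p_q, ·) is strictly
increasing in p_a on [0,1]. -/
theorem maxPrimaryRate_strictMono_in_pa (f_pd f_ps f_sd p_q : ℝ)
    (hpd : f_pd ∈ Set.Ioo (0 : ℝ) 1) (hps : f_ps ∈ Set.Ioo (0 : ℝ) 1)
    (hsd : f_sd ∈ Set.Ioo (0 : ℝ) 1) (hq : p_q ∈ Set.Ioo (0 : ℝ) 1)
    (hcoop : p_q < 1 - f_pd / f_sd) :
    ∀ p_a1 p_a2 : ℝ, 0 ≤ p_a1 → p_a1 < p_a2 → p_a2 ≤ 1 →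
      maxPrimaryRate f_pd f_ps f_sd p_q p_a1 < maxPrimaryRate f_pd f_ps f_sd p_q p_a2 :=
  maxPrimaryRate_strictMono_in_pa_general f_pd f_ps f_sd p_q hpd hps hsd hcoop
end

section
/- (Lemma 2, decreasing case) Fix channel success probabilities f_pd, f_ps, f_sd ∈ (0,1) and a queue-selection probability p_q ∈ (0,1) with p_q > 1 − f_pd/f_sd. Then the maximum achievable primary arrival rate p_a ↦ Λ_p(p_q,p_a) is strictly decreasing on [0,1]: for all 0 ≤ p_a1 < p_a2 ≤ 1 one has Λ_p(p_q,p_a2) < Λ_p(p_q,p_a1). -/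
/-!
With `A = f_sd (1 - p_q)` and `B = f_ps (1 - f_pd)` one has
`Λ_p = A · (f_pd + p_a B) / (A + p_a B) = A · (1 + (f_pd - A) / (A + p_a B))`,
which decreases in `p_a` exactly when `A < f_pd`, i.e. when `p_q > 1 - f_pd / f_sd`.
-/

open Set

theorem strictAntiOn_add_div_add {a c : ℝ} (hac : a < c) :
    StrictAntiOn (fun t => (c + t) / (a + t)) (Ioi (-a)) := by
  intro s hs t ht hst
  rw [mem_Ioi] at hs ht
  have hs' : 0 < a + s := by linarith
  have ht' : 0 < a + t := by linarith
  rw [div_lt_div_iff₀ ht' hs']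
  nlinarith [mul_pos (sub_pos.2 hac) (sub_pos.2 hst)]

theorem maxPrimaryRate_eq (f_pd f_ps f_sd p_q p_a : ℝ) :
    maxPrimaryRate f_pd f_ps f_sd p_q p_a =
      f_sd * (1 - p_q) * ((f_pd + p_a * (f_ps * (1 - f_pd))) /
        (f_sd * (1 - p_q) + p_a * (f_ps * (1 - f_pd)))) := by
  unfold maxPrimaryRate
  ring

/-- Lemma 2, decreasing case: if p_q > 1 - f_pd/f_sd then Λ_p(p_q, ·) is strictly
decreasing in p_a on [0,1]. -/
theorem maxPrimaryRate_strictAnti_in_pa (f_pd f_ps f_sd p_q : ℝ)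
    (hpd : f_pd ∈ Set.Ioo (0 : ℝ) 1) (hps : f_ps ∈ Set.Ioo (0 : ℝ) 1)
    (hsd : f_sd ∈ Set.Ioo (0 : ℝ) 1) (hq : p_q ∈ Set.Ioo (0 : ℝ) 1)
    (hnocoop : 1 - f_pd / f_sd < p_q) :
    ∀ p_a1 p_a2 : ℝ, 0 ≤ p_a1 → p_a1 < p_a2 → p_a2 ≤ 1 →
      maxPrimaryRate f_pd f_ps f_sd p_q p_a2 < maxPrimaryRate f_pd f_ps f_sd p_q p_a1 := by
  intro p₁ p₂ hp₁ hp₁₂ _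
  have hAc : f_sd * (1 - p_q) < f_pd := by
    rw [mul_comm, ← lt_div_iff₀ hsd.1]
    linarith
  simp only [maxPrimaryRate_eq]
  set A := f_sd * (1 - p_q)
  set B := f_ps * (1 - f_pd)
  have hA : 0 < A := mul_pos hsd.1 (sub_pos.2 hq.2)
  have hB : 0 < B := mul_pos hps.1 (sub_pos.2 hpd.2)
  have hmem : ∀ p : ℝ, 0 ≤ p → p * B ∈ Ioi (-A) := fun p hp =>
    mem_Ioi.2 (by linarith [mul_nonneg hp hB.le])
  exact mul_lt_mul_of_pos_left
    (strictAntiOn_add_div_add hAc (hmem p₁ hp₁) (hmem p₂ (by linarith))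
      (mul_lt_mul_of_pos_right hp₁₂ hB)) hA
end

section
/- (Phase transition) Fix channel success probabilities f_pd, f_ps, f_sd ∈ (0,1) with f_pd < f_sd, and set p_q = 1 − f_pd/f_sd (which lies in (0,1)). Then the maximum achievable primary arrival rate is insensitive to the admission probability: Λ_p(1 − f_pd/f_sd, p_a) = f_pd for every p_a ∈ [0,1]. -/
theorem one_sub_div_mem_Ioo {a b : ℝ} (ha : 0 < a) (hab : a < b) : 1 - a / b ∈ Set.Ioo 0 1 := by
  have hb : 0 < b := ha.trans hab
  constructor
  · linarith [(div_lt_one hb).mpr hab]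
  · linarith [div_pos ha hb]

theorem mul_one_sub_one_sub_div {a b : ℝ} (hb : b ≠ 0) : b * (1 - (1 - a / b)) = a := by
  rw [sub_sub_cancel, mul_div_cancel₀ a hb]

theorem maxPrimaryRate_eq_of_mul_one_sub_eq {f_pd f_ps f_sd p_q p_a : ℝ}
    (hbal : f_sd * (1 - p_q) = f_pd) (hμ : f_pd + p_a * f_ps * (1 - f_pd) ≠ 0) :
    maxPrimaryRate f_pd f_ps f_sd p_q p_a = f_pd := by
  rw [maxPrimaryRate, hbal, mul_div_assoc, div_self hμ, mul_one]

theorem add_mul_mul_one_sub_pos {a x y : ℝ} (ha : 0 < a) (ha1 : a ≤ 1) (hx : 0 ≤ x)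
    (hy : 0 ≤ y) : 0 < a + x * y * (1 - a) := by
  have : 0 ≤ x * y * (1 - a) := mul_nonneg (mul_nonneg hx hy) (sub_nonneg.mpr ha1)
  linarith

/-- Phase transition: at p_q = 1 - f_pd/f_sd (which lies in (0,1)),
Λ_p is insensitive to the admission probability and equals f_pd. -/
theorem maxPrimaryRate_phase_transition (f_pd f_ps f_sd : ℝ)
    (hpd : f_pd ∈ Set.Ioo (0 : ℝ) 1) (hps : f_ps ∈ Set.Ioo (0 : ℝ) 1)
    (hsd : f_sd ∈ Set.Ioo (0 : ℝ) 1) (hlt : f_pd < f_sd) :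
    (1 - f_pd / f_sd) ∈ Set.Ioo (0 : ℝ) 1 ∧
    ∀ p_a ∈ Set.Icc (0 : ℝ) 1,
      maxPrimaryRate f_pd f_ps f_sd (1 - f_pd / f_sd) p_a = f_pd := by
  refine ⟨one_sub_div_mem_Ioo hpd.1 hlt, fun p_a ha => ?_⟩
  exact maxPrimaryRate_eq_of_mul_one_sub_eq (mul_one_sub_one_sub_div hsd.1.ne')
    (add_mul_mul_one_sub_pos hpd.1 hpd.2.le ha.1 hps.1.le).ne'
end

section
/- Fix channel success probabilities f_pd, f_ps, f_sd ∈ (0,1) and a queue-selection probability p_q ∈ (0,1). Then for every p_a ∈ [0,1], the function a ↦ Λ_p(p_q,a) has derivative at p_a equal to (1−p_q)·(1−f_pd)·f_ps·f_sd·(f_sd·(1−p_q) − f_pd) / (f_sd·(1−p_q) + p_a·f_ps·(1−f_pd))². In particular the sign of this derivative is the sign of f_sd·(1−p_q) − f_pd. -/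
theorem hasDerivAt_linear_div_linear (a b c d x : ℝ) (hx : c + d * x ≠ 0) :
    HasDerivAt (fun y => (a + b * y) / (c + d * y)) ((b * c - a * d) / (c + d * x) ^ 2) x := by
  have hnum := ((hasDerivAt_id' x).const_mul b).const_add a
  have hden := ((hasDerivAt_id' x).const_mul d).const_add c
  exact (hnum.div hden hx).congr_deriv (by ring)

theorem Real.sign_mul_of_pos {a : ℝ} (ha : 0 < a) (r : ℝ) : Real.sign (a * r) = Real.sign r := by
  rcases lt_trichotomy r 0 with hr | rfl | hr
  · rw [Real.sign_of_neg hr, Real.sign_of_neg (mul_neg_of_pos_of_neg ha hr)]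
  · rw [mul_zero]
  · rw [Real.sign_of_pos hr, Real.sign_of_pos (mul_pos ha hr)]

theorem maxPrimaryRate_eq_linear_div_linear (f_pd f_ps f_sd p_q : ℝ) :
    maxPrimaryRate f_pd f_ps f_sd p_q = fun a =>
      (f_sd * (1 - p_q) * f_pd + f_sd * (1 - p_q) * (f_ps * (1 - f_pd)) * a) /
        (f_sd * (1 - p_q) + f_ps * (1 - f_pd) * a) := by
  funext a
  simp only [maxPrimaryRate]
  ring

/-- Derivative of Λ_p with respect to p_a, whose sign is the sign of
f_sd·(1−p_q) − f_pd. -/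
theorem deriv_maxPrimaryRate_pa (f_pd f_ps f_sd p_q : ℝ)
    (hpd : f_pd ∈ Set.Ioo (0 : ℝ) 1) (hps : f_ps ∈ Set.Ioo (0 : ℝ) 1)
    (hsd : f_sd ∈ Set.Ioo (0 : ℝ) 1) (hq : p_q ∈ Set.Ioo (0 : ℝ) 1) :
    ∀ p_a ∈ Set.Icc (0 : ℝ) 1,
      HasDerivAt (fun a => maxPrimaryRate f_pd f_ps f_sd p_q a)
        ((1 - p_q) * (1 - f_pd) * f_ps * f_sd * (f_sd * (1 - p_q) - f_pd) /
          (f_sd * (1 - p_q) + p_a * f_ps * (1 - f_pd)) ^ 2) p_a ∧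
      Real.sign ((1 - p_q) * (1 - f_pd) * f_ps * f_sd * (f_sd * (1 - p_q) - f_pd) /
          (f_sd * (1 - p_q) + p_a * f_ps * (1 - f_pd)) ^ 2)
        = Real.sign (f_sd * (1 - p_q) - f_pd) := by
  intro p_a hpa
  have hc : 0 < f_sd * (1 - p_q) := mul_pos hsd.1 (sub_pos.2 hq.2)
  have hd : 0 < f_ps * (1 - f_pd) := mul_pos hps.1 (sub_pos.2 hpd.2)
  have hden : 0 < f_sd * (1 - p_q) + f_ps * (1 - f_pd) * p_a :=
    add_pos_of_pos_of_nonneg hc (mul_nonneg hd.le hpa.1)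
  constructor
  · convert hasDerivAt_linear_div_linear _ _ _ _ p_a hden.ne' using 1
    · exact maxPrimaryRate_eq_linear_div_linear f_pd f_ps f_sd p_q
    · ring
  · rw [mul_div_right_comm]
    refine Real.sign_mul_of_pos (div_pos ?_ (pow_pos ?_ 2)) _
    · linarith [mul_pos hc hd]
    · linarith
end

section
/- (Cooperation criterion) Fix channel success probabilities f_pd, f_ps, f_sd ∈ (0,1), a queue-selection probability p_q ∈ (0,1), and an admission probability p_a ∈ (0,1]. Then cooperation strictly enlarges the primary user's maximum achievable arrival rate beyond the no-cooperation value f_pd if and only if the relay-to-destination success probability exceeds the direct-link success probability: Λ_p(p_q,p_a) > f_pd ⟺ f_sd·(1−p_q) > f_pd. Moreover Λ_p(p_q,0) = f_pd for every p_q ∈ (0,1). -/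
lemma mul_add_div_add_sub {a s t : ℝ} (h : s + t ≠ 0) :
    s * (a + t) / (s + t) - a = t * (s - a) / (s + t) := by
  field_simp
  ring

lemma lt_mul_add_div_add_iff {a s t : ℝ} (hst : 0 < s + t) (ht : 0 < t) :
    a < s * (a + t) / (s + t) ↔ a < s := by
  rw [← sub_pos, mul_add_div_add_sub hst.ne', div_pos_iff_of_pos_right hst,
    mul_pos_iff_of_pos_left ht, sub_pos]

/-- Cooperation criterion: cooperation strictly enlarges the primary user's
maximum achievable arrival rate beyond f_pd iff f_sd·(1−p_q) > f_pd.
Moreover, with admission probability 0, Λ_p reduces to f_pd. -/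
theorem cooperation_criterion (f_pd f_ps f_sd : ℝ)
    (hpd : f_pd ∈ Set.Ioo (0 : ℝ) 1) (hps : f_ps ∈ Set.Ioo (0 : ℝ) 1)
    (hsd : f_sd ∈ Set.Ioo (0 : ℝ) 1) :
    (∀ p_q ∈ Set.Ioo (0 : ℝ) 1, ∀ p_a ∈ Set.Ioc (0 : ℝ) 1,
      (f_pd < maxPrimaryRate f_pd f_ps f_sd p_q p_a ↔ f_pd < f_sd * (1 - p_q))) ∧
    ∀ p_q ∈ Set.Ioo (0 : ℝ) 1, maxPrimaryRate f_pd f_ps f_sd p_q 0 = f_pd := by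
  have relay_pos : ∀ p_q ∈ Set.Ioo (0 : ℝ) 1, 0 < f_sd * (1 - p_q) := fun p_q hq =>
    mul_pos hsd.1 (sub_pos.2 hq.2)
  refine ⟨fun p_q hq p_a ha => ?_, fun p_q hq => ?_⟩
  · have admit_pos : 0 < p_a * f_ps * (1 - f_pd) :=
      mul_pos (mul_pos ha.1 hps.1) (sub_pos.2 hpd.2)
    exact lt_mul_add_div_add_iff (add_pos (relay_pos p_q hq) admit_pos) admit_pos
  · simp only [maxPrimaryRate, zero_mul, add_zero]
    exact mul_div_cancel_left₀ _ (relay_pos p_q hq).ne'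
end

section
/- (Lemma 3, primary delay part) Fix channel success probabilities f_pd, f_ps, f_sd ∈ (0,1) with f_pd < f_sd, an admission probability p_a ∈ (0,1], and arrival rates λ_p, λ_s ∈ (0,1). Suppose 0 < p_q1 < p_q2 < 1 and the stability conditions λ_p < f_sd·(1−p_q)·μ/(f_sd·(1−p_q)+δ) and λ_s < p_q·f_sd·(1−λ_p/μ) hold at p_q = p_q1 and at p_q = p_q2. Then the average primary delay is strictly increasing in the queue-selection probability: D_p(p_q1) < D_p(p_q2). -/
/-- Average length of the primary queue N_p. -/
noncomputable def Np (f_pd f_ps p_a lp : ℝ) : ℝ :=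
  (lp - lp ^ 2) / (f_pd + p_a * f_ps * (1 - f_pd) - lp)

/-- Average length of the relay queue N_sp. -/
noncomputable def Nsp (f_pd f_ps f_sd p_a p_q lp : ℝ) : ℝ :=
  let δ := p_a * f_ps * (1 - f_pd)
  let μ := f_pd + δ
  let m := δ * (((1 - p_q) * f_sd - f_pd) / μ - (1 - p_q) * f_sd - δ)
  let n := δ * μ
  let α := (1 - p_q) * f_sd + δ
  let β := μ * (-2 * (1 - p_q) * f_sd - δ)
  let γ := (1 - p_q) * f_sd * μ ^ 2
  (m * lp ^ 2 + n * lp) / (α * lp ^ 2 + β * lp + γ)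

/-- Average primary delay D_p. -/
noncomputable def Dp (f_pd f_ps f_sd p_a p_q lp : ℝ) : ℝ :=
  (Np f_pd f_ps p_a lp + Nsp f_pd f_ps f_sd p_a p_q lp) / lp

/-- Average length of the secondary queue N_s. -/
noncomputable def Ns (f_pd f_ps f_sd p_a p_q lp ls : ℝ) : ℝ :=
  let δ := p_a * f_ps * (1 - f_pd)
  let μ := f_pd + δ
  let A := p_q * f_sd * (μ - 1)
  let B := μ - lp
  let C := (ls - p_q * f_sd) * μ + p_q * f_sd * lp
  (lp * ls * A + (ls ^ 2 - ls) * B * (B + lp)) / (B * C)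

/-- Average secondary delay D_s. -/
noncomputable def Ds (f_pd f_ps f_sd p_a p_q lp ls : ℝ) : ℝ :=
  Ns f_pd f_ps f_sd p_a p_q lp ls / ls

/-- Stability conditions for the operating point (λ_p, λ_s). -/
def IsStable (f_pd f_ps f_sd p_a p_q lp ls : ℝ) : Prop :=
  let δ := p_a * f_ps * (1 - f_pd)
  let μ := f_pd + δ
  lp < f_sd * (1 - p_q) * μ / (f_sd * (1 - p_q) + δ) ∧
    ls < p_q * f_sd * (1 - lp / μ)

/-!
`N_p` does not involve `p_q`, and `N_sp` depends on it only through `x = (1 - p_q) f_sd`, which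
decreases in `p_q`. As a function of `x`, `N_sp` is a linear fractional map `(a x + b) / (c x + d)`
whose denominator `μ (μ - λ_p) (x (μ - λ_p) - δ λ_p)` is positive exactly by the primary stability
condition, and whose determinant `a d - b c` is negative because `f_pd + δ μ < μ < 1`.
Such a map is decreasing on the half-line where its denominator is positive, so `N_sp`, and with it
`D_p`, increases with `p_q`.
-/

theorem strictAntiOn_linearFrac {a b c d : ℝ} (h : a * d - b * c < 0) :
    StrictAntiOn (fun x => (a * x + b) / (c * x + d)) {x | 0 < c * x + d} := by
  intro x₁ (hx₁ : 0 < c * x₁ + d) x₂ (hx₂ : 0 < c * x₂ + d) hx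
  rw [div_lt_div_iff₀ hx₂ hx₁]
  nlinarith [mul_neg_of_neg_of_pos h (sub_pos.2 hx)]

section RelayQueue

variable {f_pd f_ps f_sd p_a p_q lp ls δ μ : ℝ}

lemma Nsp_eq_linearFrac (hδ : p_a * f_ps * (1 - f_pd) = δ) (hμ : f_pd + δ = μ) (hμ0 : μ ≠ 0) :
    Nsp f_pd f_ps f_sd p_a p_q lp =
      (lp ^ 2 * δ * (1 - μ) * ((1 - p_q) * f_sd) + lp * δ * (μ ^ 2 - lp * (f_pd + δ * μ))) /
        (μ * (μ - lp) ^ 2 * ((1 - p_q) * f_sd) + μ * δ * lp * (lp - μ)) := by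
  subst hδ hμ
  simp only [Nsp]
  rw [← mul_div_mul_left _ _ hμ0]
  congr 1
  · field_simp
    ring
  · ring

lemma Nsp_linearFrac_det_neg (hpd : 0 < f_pd) (hδ : 0 < δ) (hμ : f_pd + δ = μ) (hμ1 : μ < 1)
    (hlp : 0 < lp) (hlpμ : lp < μ) :
    lp ^ 2 * δ * (1 - μ) * (μ * δ * lp * (lp - μ)) -
      lp * δ * (μ ^ 2 - lp * (f_pd + δ * μ)) * (μ * (μ - lp) ^ 2) < 0 := by
  have hμ0 : 0 < μ := hlp.trans hlpμ
  have hrate : 0 < f_pd + δ * μ := by positivity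
  have hrate_lt : f_pd + δ * μ < μ := by nlinarith
  have hb : 0 < μ ^ 2 - lp * (f_pd + δ * μ) := by nlinarith [mul_lt_mul'' hlpμ hrate_lt hlp.le hrate.le]
  have hbracket : 0 < lp ^ 2 * δ * (1 - μ) + (μ ^ 2 - lp * (f_pd + δ * μ)) * (μ - lp) := by
    have : 0 < 1 - μ := sub_pos.2 hμ1
    have : 0 < μ - lp := sub_pos.2 hlpμ
    positivity
  calc _ = -(μ * lp * δ * (μ - lp) *
          (lp ^ 2 * δ * (1 - μ) + (μ ^ 2 - lp * (f_pd + δ * μ)) * (μ - lp))) := by ring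
    _ < 0 := neg_neg_of_pos (mul_pos (mul_pos (by positivity) (sub_pos.2 hlpμ)) hbracket)

lemma mul_lt_mul_sub_of_isStable (hstab : IsStable f_pd f_ps f_sd p_a p_q lp ls)
    (hδ : p_a * f_ps * (1 - f_pd) = δ) (hμ : f_pd + δ = μ) (hx : 0 < (1 - p_q) * f_sd + δ) :
    δ * lp < (1 - p_q) * f_sd * (μ - lp) := by
  obtain ⟨h, -⟩ := hstab
  subst hδ hμ
  rw [lt_div_iff₀ (by linarith)] at h
  linarith

lemma Nsp_lt_Nsp {p_q₁ p_q₂ ls₁ ls₂ : ℝ} (hpd : f_pd ∈ Set.Ioo (0 : ℝ) 1)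
    (hps : f_ps ∈ Set.Ioo (0 : ℝ) 1) (hsd : 0 < f_sd) (ha : p_a ∈ Set.Ioc (0 : ℝ) 1) (hlp : 0 < lp)
    (h₁₂ : p_q₁ < p_q₂) (h₂ : p_q₂ < 1)
    (hstab₁ : IsStable f_pd f_ps f_sd p_a p_q₁ lp ls₁) (hstab₂ : IsStable f_pd f_ps f_sd p_a p_q₂ lp ls₂) :
    Nsp f_pd f_ps f_sd p_a p_q₁ lp < Nsp f_pd f_ps f_sd p_a p_q₂ lp := by
  obtain ⟨δ, hδ⟩ : ∃ δ, p_a * f_ps * (1 - f_pd) = δ := ⟨_, rfl⟩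
  obtain ⟨μ, hμ⟩ : ∃ μ, f_pd + δ = μ := ⟨_, rfl⟩
  have hδ0 : 0 < δ := hδ ▸ mul_pos (mul_pos ha.1 hps.1) (sub_pos.2 hpd.2)
  have hμ1 : μ < 1 := by
    have : p_a * f_ps < 1 := by nlinarith [ha.2, hps.2, ha.1]
    nlinarith [hpd.2]
  have hx₂ : 0 < (1 - p_q₂) * f_sd := mul_pos (sub_pos.2 h₂) hsd
  have hx₁₂ : (1 - p_q₂) * f_sd < (1 - p_q₁) * f_sd := by nlinarith
  have hs₁ := mul_lt_mul_sub_of_isStable hstab₁ hδ hμ (by linarith)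
  have hs₂ := mul_lt_mul_sub_of_isStable hstab₂ hδ hμ (by linarith)
  have hlpμ : lp < μ := by nlinarith [mul_pos hδ0 hlp]
  have hμ0 : 0 < μ := hlp.trans hlpμ
  have hden : ∀ x, δ * lp < x * (μ - lp) → 0 < μ * (μ - lp) ^ 2 * x + μ * δ * lp * (lp - μ) := by
    intro x hx
    calc 0 < μ * (μ - lp) * (x * (μ - lp) - δ * lp) := by
          have := sub_pos.2 hlpμ
          have := sub_pos.2 hx
          positivity
      _ = _ := by ring
  rw [Nsp_eq_linearFrac hδ hμ hμ0.ne', Nsp_eq_linearFrac hδ hμ hμ0.ne']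
  exact strictAntiOn_linearFrac (Nsp_linearFrac_det_neg hpd.1 hδ0 hμ hμ1 hlp hlpμ) (hden _ hs₂) (hden _ hs₁) hx₁₂

end RelayQueue

theorem Dp_strictMono_in_pq_general (f_pd f_ps f_sd p_a lp ls : ℝ)
    (hpd : f_pd ∈ Set.Ioo (0 : ℝ) 1) (hps : f_ps ∈ Set.Ioo (0 : ℝ) 1)
    (hsd : f_sd ∈ Set.Ioo (0 : ℝ) 1)
    (ha : p_a ∈ Set.Ioc (0 : ℝ) 1)
    (hlp : lp ∈ Set.Ioo (0 : ℝ) 1)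
    (p_q1 p_q2 : ℝ) (h12 : p_q1 < p_q2) (h2 : p_q2 < 1)
    (hstab1 : IsStable f_pd f_ps f_sd p_a p_q1 lp ls)
    (hstab2 : IsStable f_pd f_ps f_sd p_a p_q2 lp ls) :
    Dp f_pd f_ps f_sd p_a p_q1 lp < Dp f_pd f_ps f_sd p_a p_q2 lp :=
  div_lt_div_of_pos_right
    (add_lt_add_right (Nsp_lt_Nsp hpd hps hsd.1 ha hlp.1 h12 h2 hstab1 hstab2) _) hlp.1

/-- Lemma 3, primary delay part: under stability at both points, D_p is
strictly increasing in the queue-selection probability p_q. -/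
theorem Dp_strictMono_in_pq (f_pd f_ps f_sd p_a lp ls : ℝ)
    (hpd : f_pd ∈ Set.Ioo (0 : ℝ) 1) (hps : f_ps ∈ Set.Ioo (0 : ℝ) 1)
    (hsd : f_sd ∈ Set.Ioo (0 : ℝ) 1) (hlt : f_pd < f_sd)
    (ha : p_a ∈ Set.Ioc (0 : ℝ) 1)
    (hlp : lp ∈ Set.Ioo (0 : ℝ) 1) (hls : ls ∈ Set.Ioo (0 : ℝ) 1)
    (p_q1 p_q2 : ℝ) (h1 : 0 < p_q1) (h12 : p_q1 < p_q2) (h2 : p_q2 < 1)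
    (hstab1 : IsStable f_pd f_ps f_sd p_a p_q1 lp ls)
    (hstab2 : IsStable f_pd f_ps f_sd p_a p_q2 lp ls) :
    Dp f_pd f_ps f_sd p_a p_q1 lp < Dp f_pd f_ps f_sd p_a p_q2 lp :=
  Dp_strictMono_in_pq_general f_pd f_ps f_sd p_a lp ls hpd hps hsd ha hlp p_q1 p_q2 h12 h2 hstab1
    hstab2
end

section
/- (Primary delay at the phase transition) Fix channel success probabilities f_pd, f_ps, f_sd ∈ (0,1) with f_pd < f_sd, set p_q = 1 − f_pd/f_sd, and fix a primary arrival rate λ_p with 0 < λ_p < f_pd. Then for every admission probability p_a ∈ (0,1], the average primary delay is independent of p_a and equals D_p = (1 − λ_p)/(f_pd − λ_p); equivalently, N_p + N_sp = λ_p·(1 − λ_p)/(f_pd − λ_p) for all p_a ∈ (0,1]. -/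
/-!
When `(1 - p_q) * f_sd = f_pd` the relay drains at the direct-link rate `f_pd`. Then the
coefficient `m` collapses to `-δ μ` and the denominator of `N_sp` factors as
`μ (f_pd - λ_p) (μ - λ_p)`, so `N_sp = δ λ_p (1 - λ_p) / ((f_pd - λ_p) (μ - λ_p))`.
Adding `N_p = λ_p (1 - λ_p) / (μ - λ_p)` and using `(f_pd - λ_p) + δ = μ - λ_p` removes
every dependence on `δ`, hence on `p_a`.
-/

theorem Nsp_eq_of_relay_rate_eq {f_pd f_ps f_sd p_a p_q lp : ℝ}
    (hq : (1 - p_q) * f_sd = f_pd) (hμ : f_pd + p_a * f_ps * (1 - f_pd) ≠ 0) :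
    Nsp f_pd f_ps f_sd p_a p_q lp =
      p_a * f_ps * (1 - f_pd) * (lp * (1 - lp)) /
        ((f_pd - lp) * (f_pd + p_a * f_ps * (1 - f_pd) - lp)) := by
  have hβ : -2 * (1 - p_q) * f_sd = -2 * f_pd := by rw [mul_assoc, hq]
  simp only [Nsp, hβ, hq, sub_self, zero_div]
  generalize p_a * f_ps * (1 - f_pd) = δ at hμ ⊢
  rw [eq_comm, ← mul_div_mul_left _ _ hμ]
  congr 1 <;> ring

theorem Np_add_Nsp_eq_of_relay_rate_eq {f_pd f_ps f_sd p_a p_q lp : ℝ}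
    (hq : (1 - p_q) * f_sd = f_pd) (hμ : f_pd + p_a * f_ps * (1 - f_pd) ≠ 0)
    (hμlp : f_pd + p_a * f_ps * (1 - f_pd) - lp ≠ 0) (hlp : f_pd - lp ≠ 0) :
    Np f_pd f_ps p_a lp + Nsp f_pd f_ps f_sd p_a p_q lp = lp * (1 - lp) / (f_pd - lp) := by
  rw [Nsp_eq_of_relay_rate_eq hq hμ, Np]
  generalize p_a * f_ps * (1 - f_pd) = δ at hμlp ⊢
  field_simp
  ring

theorem Dp_phase_transition_general (f_pd f_ps f_sd lp : ℝ)
    (hpd : f_pd ∈ Set.Ioo (0 : ℝ) 1) (hps : f_ps ∈ Set.Ioo (0 : ℝ) 1)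
    (hsd : f_sd ∈ Set.Ioo (0 : ℝ) 1)
    (hlp0 : 0 < lp) (hlp : lp < f_pd) :
    ∀ p_a ∈ Set.Ioc (0 : ℝ) 1,
      Dp f_pd f_ps f_sd p_a (1 - f_pd / f_sd) lp = (1 - lp) / (f_pd - lp) ∧
      Np f_pd f_ps p_a lp + Nsp f_pd f_ps f_sd p_a (1 - f_pd / f_sd) lp
        = lp * (1 - lp) / (f_pd - lp) := by
  intro p_a hpa
  have hq : (1 - (1 - f_pd / f_sd)) * f_sd = f_pd := by
    rw [sub_sub_cancel, div_mul_cancel₀ _ hsd.1.ne']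
  have hδ : 0 ≤ p_a * f_ps * (1 - f_pd) :=
    mul_nonneg (mul_nonneg hpa.1.le hps.1.le) (sub_nonneg.2 hpd.2.le)
  have hsum : Np f_pd f_ps p_a lp + Nsp f_pd f_ps f_sd p_a (1 - f_pd / f_sd) lp
      = lp * (1 - lp) / (f_pd - lp) :=
    Np_add_Nsp_eq_of_relay_rate_eq hq (by linarith) (by linarith) (by linarith)
  refine ⟨?_, hsum⟩
  rw [Dp, hsum, mul_div_assoc, mul_div_cancel_left₀ _ hlp0.ne']

/-- Primary delay at the phase transition p_q = 1 − f_pd/f_sd: for every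
p_a ∈ (0,1], the average primary delay is independent of p_a and equals
(1 − λ_p)/(f_pd − λ_p); equivalently N_p + N_sp = λ_p(1 − λ_p)/(f_pd − λ_p). -/
theorem Dp_phase_transition (f_pd f_ps f_sd lp : ℝ)
    (hpd : f_pd ∈ Set.Ioo (0 : ℝ) 1) (hps : f_ps ∈ Set.Ioo (0 : ℝ) 1)
    (hsd : f_sd ∈ Set.Ioo (0 : ℝ) 1) (hlt : f_pd < f_sd)
    (hlp0 : 0 < lp) (hlp : lp < f_pd) :
    ∀ p_a ∈ Set.Ioc (0 : ℝ) 1,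
      Dp f_pd f_ps f_sd p_a (1 - f_pd / f_sd) lp = (1 - lp) / (f_pd - lp) ∧
      Np f_pd f_ps p_a lp + Nsp f_pd f_ps f_sd p_a (1 - f_pd / f_sd) lp
        = lp * (1 - lp) / (f_pd - lp) :=
  Dp_phase_transition_general f_pd f_ps f_sd lp hpd hps hsd hlp0 hlp
end

section
/- (Lemma 4, secondary delay part) Fix channel success probabilities f_pd, f_ps, f_sd ∈ (0,1) with f_pd < f_sd, a queue-selection probability p_q ∈ (0,1), and arrival rates λ_p, λ_s ∈ (0,1). Suppose 0 < p_a1 < p_a2 ≤ 1 and the stability conditions λ_p < f_sd·(1−p_q)·μ/(f_sd·(1−p_q)+δ) and λ_s < p_q·f_sd·(1−λ_p/μ) hold at p_a = p_a1 and at p_a = p_a2. Then the average secondary delay is strictly decreasing in the admission probability, irrespective of the choice of p_q: D_s(p_a2) < D_s(p_a1). -/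
/-!
Write `k = p_q f_sd`. The delay `D_s` depends on `p_a` only through the primary service rate
`μ = f_pd + p_a f_ps (1 - f_pd)`, which increases with `p_a`. In partial fractions,
`D_s = (1 - λ_s)/(k - λ_s) + k λ_p (1 - λ_p)/((μ - λ_p) w) + k λ_p (1 - k)/((k - λ_s) w)`,
where `w = k (μ - λ_p) - λ_s μ > 0` is the slack of the secondary stability condition.
Stability forces `λ_p < μ` and `λ_s < k ≤ 1`, and `μ - λ_p` and `w` both increase with `μ`,
so every term is nonincreasing in `μ` and the middle one strictly decreasing.
-/

/-- Service rates `μ` of the primary user at which the secondary queue, with service probability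
`k`, is stable under arrival rates `p` (primary) and `s` (secondary). -/
def stableServiceRates (k p s : ℝ) : Set ℝ :=
  {μ | 0 < μ ∧ s * μ < k * (μ - p)}

noncomputable def secondaryDelayOfServiceRate (k p s μ : ℝ) : ℝ :=
  (1 - s) / (k - s) + k * p * (1 - p) / ((μ - p) * (k * (μ - p) - s * μ)) +
    k * p * (1 - k) / ((k - s) * (k * (μ - p) - s * μ))

section StableServiceRates

variable {k p s μ : ℝ}

theorem lt_of_mem_stableServiceRates (hp : 0 < p) (hs : 0 < s) (hk : 0 < k)
    (hμ : μ ∈ stableServiceRates k p s) : p < μ ∧ s < k := by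
  obtain ⟨hμ0, hslack⟩ := hμ
  constructor <;> nlinarith

theorem secondaryDelayOfServiceRate_strictAntiOn (hp : 0 < p) (hp1 : p < 1) (hs : 0 < s)
    (hk : 0 < k) (hk1 : k ≤ 1) :
    StrictAntiOn (secondaryDelayOfServiceRate k p s) (stableServiceRates k p s) := by
  intro a ha b hb hab
  obtain ⟨hpa, hsk⟩ := lt_of_mem_stableServiceRates hp hs hk ha
  have hwa : 0 < k * (a - p) - s * a := sub_pos.mpr ha.2
  have hw_lt : k * (a - p) - s * a < k * (b - p) - s * b := by nlinarith
  have hks : 0 < k - s := sub_pos.mpr hsk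
  unfold secondaryDelayOfServiceRate
  have hmid : k * p * (1 - p) / ((b - p) * (k * (b - p) - s * b)) <
      k * p * (1 - p) / ((a - p) * (k * (a - p) - s * a)) := by
    gcongr
  have hlast : k * p * (1 - k) / ((k - s) * (k * (b - p) - s * b)) ≤
      k * p * (1 - k) / ((k - s) * (k * (a - p) - s * a)) := by
    gcongr
  linarith

end StableServiceRates

theorem Ds_eq_secondaryDelayOfServiceRate {f_pd f_ps f_sd p_a p_q lp ls : ℝ}
    (hlp : 0 < lp) (hls : 0 < ls) (hk : 0 < p_q * f_sd)
    (hμ : f_pd + p_a * f_ps * (1 - f_pd) ∈ stableServiceRates (p_q * f_sd) lp ls) :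
    Ds f_pd f_ps f_sd p_a p_q lp ls =
      secondaryDelayOfServiceRate (p_q * f_sd) lp ls (f_pd + p_a * f_ps * (1 - f_pd)) := by
  obtain ⟨hpμ, hsk⟩ := lt_of_mem_stableServiceRates hlp hls hk hμ
  simp only [Ds, Ns, secondaryDelayOfServiceRate]
  generalize f_pd + p_a * f_ps * (1 - f_pd) = μ at hμ hpμ ⊢
  generalize p_q * f_sd = k at hμ hsk ⊢
  have hw : 0 < k * (μ - lp) - ls * μ := sub_pos.mpr hμ.2
  rw [show (ls - k) * μ + k * lp = -(k * (μ - lp) - ls * μ) by ring]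
  field_simp [(sub_pos.mpr hpμ).ne', (sub_pos.mpr hsk).ne']
  ring

theorem IsStable.slack {f_pd f_ps f_sd p_a p_q lp ls : ℝ}
    (h : IsStable f_pd f_ps f_sd p_a p_q lp ls) (hμ : 0 < f_pd + p_a * f_ps * (1 - f_pd)) :
    ls * (f_pd + p_a * f_ps * (1 - f_pd)) <
      p_q * f_sd * (f_pd + p_a * f_ps * (1 - f_pd) - lp) := by
  have hs : ls < p_q * f_sd * (1 - lp / (f_pd + p_a * f_ps * (1 - f_pd))) := h.2
  generalize f_pd + p_a * f_ps * (1 - f_pd) = μ at hs hμ ⊢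
  calc ls * μ < p_q * f_sd * (1 - lp / μ) * μ := mul_lt_mul_of_pos_right hs hμ
    _ = p_q * f_sd * (μ - lp) := by field_simp

theorem Ds_strictAnti_in_pa_general (f_pd f_ps f_sd p_q lp ls : ℝ)
    (hpd : f_pd ∈ Set.Ioo (0 : ℝ) 1) (hps : f_ps ∈ Set.Ioo (0 : ℝ) 1)
    (hsd : f_sd ∈ Set.Ioo (0 : ℝ) 1)
    (hq : p_q ∈ Set.Ioo (0 : ℝ) 1)
    (hlp : lp ∈ Set.Ioo (0 : ℝ) 1) (hls : ls ∈ Set.Ioo (0 : ℝ) 1)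
    (p_a1 p_a2 : ℝ) (h1 : 0 < p_a1) (h12 : p_a1 < p_a2)
    (hstab1 : IsStable f_pd f_ps f_sd p_a1 p_q lp ls)
    (hstab2 : IsStable f_pd f_ps f_sd p_a2 p_q lp ls) :
    Ds f_pd f_ps f_sd p_a2 p_q lp ls < Ds f_pd f_ps f_sd p_a1 p_q lp ls := by
  have hδ : 0 < f_ps * (1 - f_pd) := mul_pos hps.1 (sub_pos.mpr hpd.2)
  have hμ_lt : f_pd + p_a1 * f_ps * (1 - f_pd) < f_pd + p_a2 * f_ps * (1 - f_pd) := by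
    nlinarith
  have hμ1 : 0 < f_pd + p_a1 * f_ps * (1 - f_pd) := by nlinarith [hpd.1]
  have hμ2 : 0 < f_pd + p_a2 * f_ps * (1 - f_pd) := hμ1.trans hμ_lt
  have hk : 0 < p_q * f_sd := mul_pos hq.1 hsd.1
  have hk1 : p_q * f_sd ≤ 1 := mul_le_one₀ hq.2.le hsd.1.le hsd.2.le
  have hmem1 := And.intro hμ1 (hstab1.slack hμ1)
  have hmem2 := And.intro hμ2 (hstab2.slack hμ2)
  rw [Ds_eq_secondaryDelayOfServiceRate hlp.1 hls.1 hk hmem1,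
    Ds_eq_secondaryDelayOfServiceRate hlp.1 hls.1 hk hmem2]
  exact secondaryDelayOfServiceRate_strictAntiOn hlp.1 hlp.2 hls.1 hk hk1 hmem1 hmem2 hμ_lt

/-- Lemma 4, secondary delay part: under stability at both points, D_s is
strictly decreasing in the admission probability p_a, irrespective of p_q. -/
theorem Ds_strictAnti_in_pa (f_pd f_ps f_sd p_q lp ls : ℝ)
    (hpd : f_pd ∈ Set.Ioo (0 : ℝ) 1) (hps : f_ps ∈ Set.Ioo (0 : ℝ) 1)
    (hsd : f_sd ∈ Set.Ioo (0 : ℝ) 1) (hlt : f_pd < f_sd)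
    (hq : p_q ∈ Set.Ioo (0 : ℝ) 1)
    (hlp : lp ∈ Set.Ioo (0 : ℝ) 1) (hls : ls ∈ Set.Ioo (0 : ℝ) 1)
    (p_a1 p_a2 : ℝ) (h1 : 0 < p_a1) (h12 : p_a1 < p_a2) (h2 : p_a2 ≤ 1)
    (hstab1 : IsStable f_pd f_ps f_sd p_a1 p_q lp ls)
    (hstab2 : IsStable f_pd f_ps f_sd p_a2 p_q lp ls) :
    Ds f_pd f_ps f_sd p_a2 p_q lp ls < Ds f_pd f_ps f_sd p_a1 p_q lp ls :=
  Ds_strictAnti_in_pa_general f_pd f_ps f_sd p_q lp ls hpd hps hsd hq hlp hls p_a1 p_a2 h1 h12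
    hstab1 hstab2
end
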